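/- arXiv:2507.00727 — 2 statements merged into one kernel-verified Lean document; each statement's English description precedes it below -/
import Mathlib

section
/- Fix an integer t ≥ 2 and nonnegative integers a_1,…,a_{t−1}, not all zero, and let R = ⋃_{s=1}^{t−1} { (Y,i) : Y ⊆ [t], |Y| = s, i ∈ [a_s] }. Then the array B is a (K', F', Z', S) placement delivery array with K' = t, F' = Σ_{s=1}^{t−1} a_s·C(t,s), Z' = Σ_{s=1}^{t−1} a_s·C(t−1, s−1) and S = Σ_{s=1}^{t−1} a_s·C(t, s+1): each column of B contains exactly Z' stars; B has exactly S distinct integer entries and each of them occurs at least once; and whenever two distinct cells of B carry the same integer entry, they lie in distinct rows and distinct columns, and the two cross cells (row of one, column of the other) both contain ⋆. -/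
open Finset

/-- The row-index set `R = ⋃_{s=1}^{t−1} { (Y,i) : Y ⊆ [t], |Y| = s, i ∈ [a_s] }`
of the array `B`, where `[n] = {1, …, n}`. -/
def Rset (t : ℕ) (a : ℕ → ℕ) : Finset (Finset ℕ × ℕ) :=
  (Finset.Icc 1 (t - 1)).biUnion fun s =>
    (Finset.powersetCard s (Finset.Icc 1 t)) ×ˢ (Finset.Icc 1 (a s))

/-- The entry of the array `B` at row `(Y,i)` and column `j`:
`none` represents the star `⋆` (when `j ∈ Y`), and `some (Y ∪ {j}, i)` is the
integer entry (when `j ∉ Y`). -/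
def Bent (p : Finset ℕ × ℕ) (j : ℕ) : Option (Finset ℕ × ℕ) :=
  if j ∈ p.1 then none else some (insert j p.1, p.2)

/-- The set of integer entries of the array `B`. -/
def IntEntries (t : ℕ) (a : ℕ → ℕ) : Finset (Finset ℕ × ℕ) :=
  (((Rset t a) ×ˢ (Finset.Icc 1 t)).filter
      (fun q : (Finset ℕ × ℕ) × ℕ => q.2 ∉ q.1.1)).image
    (fun q : (Finset ℕ × ℕ) × ℕ => (insert q.2 q.1.1, q.1.2))

/-! Rows, stars of a column and integer entries are each a disjoint union over `s ∈ [t−1]` of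
blocks `A_s × [a_s]`, disjoint because the sets in `A_s` have a size depending injectively on `s`:
`A_s` consists of the `s`-subsets of `[t]`, of those containing `j`, and of the `(s+1)`-subsets
(each one is `Y ∪ {j}` for some row `(Y,i)`), respectively. The cross stars come from the fact
that `Y ∪ {j} = Y' ∪ {j'}` with `j ∉ Y`, `j' ∉ Y'` and `(Y,j) ≠ (Y',j')` forces `j ≠ j'`,
`j' ∈ Y` and `j ∈ Y'`. -/

section Blocks

variable {ι α β : Type*} {I : Finset ι} {f : ι → ℕ} {A : ι → Finset (Finset α)}

lemma pairwiseDisjoint_prod_of_card_eq (hf : Set.InjOn f I)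
    (hA : ∀ s ∈ I, ∀ Y ∈ A s, Y.card = f s) (v : ι → Finset β) :
    (I : Set ι).PairwiseDisjoint fun s => A s ×ˢ v s := by
  intro s hs s' hs' hne
  rw [Function.onFun, disjoint_left]
  rintro ⟨Y, i⟩ h h'
  rw [mem_product] at h h'
  exact hne (hf hs hs' ((hA s hs Y h.1).symm.trans (hA s' hs' Y h'.1)))

lemma card_biUnion_prod_of_card_eq [DecidableEq α] [DecidableEq β] (v : ι → Finset β)
    (hf : Set.InjOn f I) (hA : ∀ s ∈ I, ∀ Y ∈ A s, Y.card = f s) :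
    (I.biUnion fun s => A s ×ˢ v s).card = ∑ s ∈ I, (A s).card * (v s).card := by
  simp only [card_biUnion (pairwiseDisjoint_prod_of_card_eq hf hA v), card_product]

end Blocks

lemma Finset.eq_of_insert_eq_insert {α : Type*} [DecidableEq α] {a : α} {s t : Finset α}
    (ha : a ∉ s) (ha' : a ∉ t) (h : insert a s = insert a t) : s = t := by
  rw [← erase_insert ha, h, erase_insert ha']

lemma Finset.mem_of_insert_eq_insert {α : Type*} [DecidableEq α] {a b : α} {s t : Finset α}
    (h : insert a s = insert b t) (hab : a ≠ b) : b ∈ s :=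
  (mem_insert.1 (h ▸ mem_insert_self b t)).resolve_left hab.symm

lemma bent_eq_none_iff {p : Finset ℕ × ℕ} {j : ℕ} : Bent p j = none ↔ j ∈ p.1 := by
  unfold Bent
  split_ifs with h <;> simp [h]

lemma bent_eq_some_iff {p e : Finset ℕ × ℕ} {j : ℕ} :
    Bent p j = some e ↔ j ∉ p.1 ∧ (insert j p.1, p.2) = e := by
  unfold Bent
  split_ifs with h <;> simp [h]

lemma bent_cross_of_eq_some {p p' e : Finset ℕ × ℕ} {j j' : ℕ} (hne : (p, j) ≠ (p', j'))
    (he : Bent p j = some e) (he' : Bent p' j' = some e) :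
    p ≠ p' ∧ j ≠ j' ∧ Bent p j' = none ∧ Bent p' j = none := by
  obtain ⟨hj, rfl⟩ := bent_eq_some_iff.1 he
  obtain ⟨hj', he⟩ := bent_eq_some_iff.1 he'
  rw [Prod.mk.injEq] at he
  obtain ⟨hY, hi⟩ := he
  have hjj' : j ≠ j' := by
    rintro rfl
    exact hne (by rw [Prod.ext (Finset.eq_of_insert_eq_insert hj hj' hY.symm) hi.symm])
  have hj'Y : j' ∈ p.1 := Finset.mem_of_insert_eq_insert hY.symm hjj'
  have hjY' : j ∈ p'.1 := Finset.mem_of_insert_eq_insert hY hjj'.symm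
  exact ⟨fun h => hj (h ▸ hjY'), hjj', bent_eq_none_iff.2 hj'Y, bent_eq_none_iff.2 hjY'⟩

lemma filter_bent_eq_none_rset (t : ℕ) (a : ℕ → ℕ) (j : ℕ) :
    (Rset t a).filter (fun p => Bent p j = none) = (Icc 1 (t - 1)).biUnion fun s =>
      (powersetCard s (Icc 1 t)).filter ({j} ⊆ ·) ×ˢ Icc 1 (a s) := by
  simp only [Rset, bent_eq_none_iff, filter_biUnion, singleton_subset_iff,
    filter_product_left (fun Y => j ∈ Y)]

lemma intEntries_eq_biUnion (t : ℕ) (a : ℕ → ℕ) :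
    IntEntries t a = (Icc 1 (t - 1)).biUnion fun s =>
      powersetCard (s + 1) (Icc 1 t) ×ˢ Icc 1 (a s) := by
  ext ⟨Z, i⟩
  simp only [IntEntries, Rset, mem_image, mem_filter, mem_product, mem_biUnion,
    mem_powersetCard, Prod.mk.injEq]
  constructor
  · rintro ⟨⟨⟨Y, _⟩, j⟩, ⟨⟨⟨s, hs, ⟨hYt, hYs⟩, hi⟩, hj⟩, hjY⟩, rfl, rfl⟩
    exact ⟨s, hs, ⟨insert_subset hj hYt, by rw [card_insert_of_notMem hjY, hYs]⟩, hi⟩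
  · rintro ⟨s, hs, ⟨hZt, hZs⟩, hi⟩
    obtain ⟨j, hjZ⟩ : Z.Nonempty := card_pos.1 (by omega)
    refine ⟨⟨⟨Z.erase j, i⟩, j⟩, ⟨⟨⟨s, hs, ⟨(erase_subset j Z).trans hZt, ?_⟩, hi⟩, hZt hjZ⟩,
      notMem_erase j Z⟩, insert_erase hjZ, rfl⟩
    rw [card_erase_of_mem hjZ, hZs, Nat.add_sub_cancel]

theorem stmt9_general (t : ℕ) (a : ℕ → ℕ) :
    (Rset t a).card = ∑ s ∈ Finset.Icc 1 (t - 1), a s * Nat.choose t s ∧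
    (∀ j ∈ Finset.Icc 1 t,
      ((Rset t a).filter (fun p => Bent p j = none)).card =
        ∑ s ∈ Finset.Icc 1 (t - 1), a s * Nat.choose (t - 1) (s - 1)) ∧
    (IntEntries t a).card =
      ∑ s ∈ Finset.Icc 1 (t - 1), a s * Nat.choose t (s + 1) ∧
    (∀ p ∈ Rset t a, ∀ p' ∈ Rset t a, ∀ j ∈ Finset.Icc 1 t, ∀ j' ∈ Finset.Icc 1 t,
      (p, j) ≠ (p', j') → ∀ e : Finset ℕ × ℕ,
        Bent p j = some e → Bent p' j' = some e →
          p ≠ p' ∧ j ≠ j' ∧ Bent p j' = none ∧ Bent p' j = none) := by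
  have hcard {n : ℕ} {Y : Finset ℕ} (hY : Y ∈ powersetCard n (Icc 1 t)) : Y.card = n :=
    (mem_powersetCard.1 hY).2
  refine ⟨?_, fun j hj => ?_, ?_, fun _ _ _ _ _ _ _ _ hne _ => bent_cross_of_eq_some hne⟩
  · rw [Rset, card_biUnion_prod_of_card_eq _ (Set.injOn_id _)]
    · simp [mul_comm]
    · exact fun _ _ _ => hcard
  · rw [filter_bent_eq_none_rset, card_biUnion_prod_of_card_eq _ (Set.injOn_id _)]
    · refine sum_congr rfl fun s hs => ?_
      rw [card_filter_powersetCard_subset _ _ _ (singleton_subset_iff.2 hj)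
        (by simpa using (mem_Icc.1 hs).1)]
      simp [mul_comm]
    · exact fun _ _ _ hY => hcard (mem_filter.1 hY).1
  · rw [intEntries_eq_biUnion, card_biUnion_prod_of_card_eq _ (add_left_injective 1).injOn]
    · simp [mul_comm]
    · exact fun _ _ _ => hcard

/-- `B` is a `(K', F', Z', S)` PDA with `K' = t`, `F' = Σ a_s·C(t,s)`,
`Z' = Σ a_s·C(t−1,s−1)`, `S = Σ a_s·C(t,s+1)`: (rows) `|R| = F'`; (C1) each of
the `t` columns contains exactly `Z'` stars; (C2) there are exactly `S` distinct
integer entries, each occurring (at least once, by definition of `IntEntries`);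
(C3) two distinct cells with the same integer entry lie in distinct rows and
distinct columns, and the two cross cells contain `⋆`. -/
theorem stmt9 (t : ℕ) (ht : 2 ≤ t) (a : ℕ → ℕ)
    (hnz : ∃ s ∈ Finset.Icc 1 (t - 1), a s ≠ 0) :
    (Rset t a).card = ∑ s ∈ Finset.Icc 1 (t - 1), a s * Nat.choose t s ∧
    (∀ j ∈ Finset.Icc 1 t,
      ((Rset t a).filter (fun p => Bent p j = none)).card =
        ∑ s ∈ Finset.Icc 1 (t - 1), a s * Nat.choose (t - 1) (s - 1)) ∧
    (IntEntries t a).card =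
      ∑ s ∈ Finset.Icc 1 (t - 1), a s * Nat.choose t (s + 1) ∧
    (∀ p ∈ Rset t a, ∀ p' ∈ Rset t a, ∀ j ∈ Finset.Icc 1 t, ∀ j' ∈ Finset.Icc 1 t,
      (p, j) ≠ (p', j') → ∀ e : Finset ℕ × ℕ,
        Bent p j = some e → Bent p' j' = some e →
          p ≠ p' ∧ j ≠ j' ∧ Bent p j' = none ∧ Bent p' j = none) :=
  stmt9_general t a
end

section
/- Let (X, 𝒜) be a t-(v,k,λ) design with pairwise distinct blocks, let τ = {x_1, …, x_t} ⊆ X be a set of t points, and for each s ∈ {1,…,t−1} let a_s be an integer with 0 ≤ a_s ≤ λ_s^t, where λ_s^t = λ·C(v−t, k−s)/C(v−t, k−t). Let R = ⋃_{s=1}^{t−1} { (Y,i) : Y ⊆ [t], |Y| = s, i ∈ [a_s] }. Then there exists an injective map ψ : R → 𝒜 such that for every (Y,i) ∈ R, the block ψ((Y,i)) satisfies ψ((Y,i)) ∩ τ = { x_j : j ∈ Y }. -/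
/-!
Double counting pairs (block, `t`-set) shows that an `s`-subset `S` of `X` with `s ≤ t` lies in
`λ·C(v−s,k−s)/C(v−t,k−t)` blocks. Forbidding the points of `τ \ S` one at a time and using Pascal's
rule, exactly `λ·C(v−t,k−s)/C(v−t,k−t) = λ_s^t` blocks meet `τ` in `S`. Hence for each `Y` there
are at least `a_{|Y|}` blocks with trace `{x_j : j ∈ Y}` on `τ`; these families are disjoint for
distinct `Y`, so picking `a_{|Y|}` distinct blocks from each gives `ψ`.
-/

open Finset

/-- `(X, 𝒜)` is a `t`-`(v, k, λ)` design with pairwise distinct blocks: `X` is a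
set of `v` points, `𝒜` is a set of `k`-element subsets of `X` (blocks), with
`v > k ≥ t ≥ 1`, and every `t`-element subset of `X` is contained in exactly
`lam` blocks. -/
def IsDesignF {α : Type*} [DecidableEq α] (t v k lam : ℕ)
    (X : Finset α) (𝒜 : Finset (Finset α)) : Prop :=
  X.card = v ∧ k < v ∧ t ≤ k ∧ 1 ≤ t ∧
  (∀ A ∈ 𝒜, A ⊆ X ∧ A.card = k) ∧
  ∀ T : Finset α, T ⊆ X → T.card = t →
    (𝒜.filter (fun A => T ⊆ A)).card = lam

theorem Finset.inter_eq_iff_subset_and_disjoint_sdiff {α : Type*} [DecidableEq α]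
    {A S τ : Finset α} (hSτ : S ⊆ τ) : A ∩ τ = S ↔ S ⊆ A ∧ Disjoint A (τ \ S) := by
  rw [Finset.ext_iff, subset_iff, disjoint_left]
  simp only [mem_inter, mem_sdiff]
  grind

theorem Set.PairwiseDisjoint.exists_injOn_of_card_le {ι κ β : Type*} [Nonempty β] {I : Set ι}
    {F : ι → Finset β} {J : ι → Finset κ} (hF : I.PairwiseDisjoint F)
    (hJ : ∀ i ∈ I, #(J i) ≤ #(F i)) :
    ∃ ψ : ι × κ → β, Set.InjOn ψ {p | p.1 ∈ I ∧ p.2 ∈ J p.1} ∧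
      ∀ p : ι × κ, p.1 ∈ I → p.2 ∈ J p.1 → ψ p ∈ F p.1 := by
  have hfiber : ∀ i ∈ I, ∃ f : κ → β, Set.MapsTo f (J i) (F i) ∧ Set.InjOn f (J i) := by
    intro i hi
    refine (J i).finite_toSet.exists_injOn_of_encard_le (t := (F i : Set β)) ?_
    simpa only [Set.encard_coe_eq_coe_finsetCard, Nat.cast_le] using hJ i hi
  choose! f hmaps hinj using hfiber
  refine ⟨fun p => f p.1 p.2, ?_, fun p hi hj => hmaps p.1 hi hj⟩
  rintro ⟨i, j⟩ ⟨hi, hj : j ∈ J i⟩ ⟨i', j'⟩ ⟨hi', hj' : j' ∈ J i'⟩ (heq : f i j = f i' j')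
  obtain rfl : i = i' := by
    by_contra hne
    exact Finset.disjoint_left.1 (hF hi hi' hne) (hmaps i hi hj) (heq ▸ hmaps i' hi' hj')
  rw [hinj i hi hj hj' heq]

namespace IsDesignF

variable {α : Type*} [DecidableEq α] {t v k lam : ℕ} {X : Finset α} {𝒜 : Finset (Finset α)}

theorem card_superset_mul_choose (hdes : IsDesignF t v k lam X 𝒜) {S : Finset α}
    (hSX : S ⊆ X) (hSt : #S ≤ t) :
    #{A ∈ 𝒜 | S ⊆ A} * (k - #S).choose (t - #S) = lam * (v - #S).choose (t - #S) := by
  obtain ⟨hXv, -, -, -, hblock, hcount⟩ := hdes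
  have hblocks : ∀ A ∈ {A ∈ 𝒜 | S ⊆ A},
      #(((X \ S).powersetCard (t - #S)).bipartiteAbove (fun A T => T ⊆ A) A)
        = (k - #S).choose (t - #S) := by
    intro A hA
    obtain ⟨hA𝒜, hSA⟩ := mem_filter.1 hA
    obtain ⟨hAX, hAk⟩ := hblock A hA𝒜
    have : ((X \ S).powersetCard (t - #S)).bipartiteAbove (fun A T => T ⊆ A) A
        = (A \ S).powersetCard (t - #S) := by
      ext T
      simp only [bipartiteAbove, mem_filter, mem_powersetCard, subset_sdiff]
      exact ⟨fun ⟨⟨⟨_, hTS⟩, hT⟩, hTA⟩ => ⟨⟨hTA, hTS⟩, hT⟩,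
        fun ⟨⟨hTA, hTS⟩, hT⟩ => ⟨⟨⟨hTA.trans hAX, hTS⟩, hT⟩, hTA⟩⟩
    rw [this, card_powersetCard, card_sdiff_of_subset hSA, hAk]
  have htsets : ∀ T ∈ (X \ S).powersetCard (t - #S),
      #({A ∈ 𝒜 | S ⊆ A}.bipartiteBelow (fun A T => T ⊆ A) T) = lam := by
    intro T hT
    obtain ⟨hTXS, hT⟩ := mem_powersetCard.1 hT
    obtain ⟨hTX, hTS⟩ := subset_sdiff.1 hTXS
    rw [bipartiteBelow, filter_filter]
    simp_rw [← union_subset_iff]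
    exact hcount _ (union_subset hSX hTX) (by rw [card_union_of_disjoint hTS.symm]; omega)
  rw [card_mul_eq_card_mul _ hblocks htsets, card_powersetCard, card_sdiff_of_subset hSX, hXv,
    mul_comm]

theorem card_superset_mul_choose_sub (hdes : IsDesignF t v k lam X 𝒜) {S : Finset α}
    (hSX : S ⊆ X) (hSt : #S ≤ t) :
    #{A ∈ 𝒜 | S ⊆ A} * (v - t).choose (k - t) = lam * (v - #S).choose (k - #S) := by
  have hkv := hdes.2.1
  have htk := hdes.2.2.1
  have hpos : 0 < (k - #S).choose (t - #S) := Nat.choose_pos (by omega)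
  have hchoose : (v - #S).choose (k - #S) * (k - #S).choose (t - #S)
      = (v - #S).choose (t - #S) * (v - t).choose (k - t) := by
    rw [Nat.choose_mul (by omega)]
    congr 2 <;> omega
  refine Nat.eq_of_mul_eq_mul_right hpos ?_
  calc #{A ∈ 𝒜 | S ⊆ A} * (v - t).choose (k - t) * (k - #S).choose (t - #S)
      = #{A ∈ 𝒜 | S ⊆ A} * (k - #S).choose (t - #S) * (v - t).choose (k - t) := by ring
    _ = lam * ((v - #S).choose (t - #S) * (v - t).choose (k - t)) := by
      rw [hdes.card_superset_mul_choose hSX hSt, mul_assoc]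
    _ = lam * (v - #S).choose (k - #S) * (k - #S).choose (t - #S) := by rw [← hchoose, mul_assoc]

theorem card_superset_disjoint_mul_choose (hdes : IsDesignF t v k lam X 𝒜) {S D : Finset α}
    (hSX : S ⊆ X) (hDX : D ⊆ X) (hSD : Disjoint S D) (hle : #S + #D ≤ t) :
    #{A ∈ 𝒜 | S ⊆ A ∧ Disjoint A D} * (v - t).choose (k - t)
      = lam * (v - #S - #D).choose (k - #S) := by
  induction D using Finset.induction_on generalizing S with
  | empty => simpa using hdes.card_superset_mul_choose_sub hSX (by omega)
  | insert y D hyD ih =>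
    have hkv := hdes.2.1
    have htk := hdes.2.2.1
    rw [disjoint_insert_right] at hSD
    have hyS : y ∉ S := hSD.1
    rw [card_insert_of_notMem hyD] at hle ⊢
    have hsplit : #{A ∈ 𝒜 | S ⊆ A ∧ Disjoint A D}
        = #{A ∈ 𝒜 | insert y S ⊆ A ∧ Disjoint A D}
          + #{A ∈ 𝒜 | S ⊆ A ∧ Disjoint A (insert y D)} := by
      rw [← card_filter_add_card_filter_not (s := {A ∈ 𝒜 | S ⊆ A ∧ Disjoint A D})
        (fun A => y ∈ A), filter_filter, filter_filter]
      simp only [insert_subset_iff, disjoint_insert_right]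
      congr 2 <;> refine filter_congr fun A _ => ?_ <;> tauto
    have hwith := ih (insert_subset (hDX (mem_insert_self y D)) hSX)
      ((subset_insert y D).trans hDX) (disjoint_insert_left.2 ⟨hyD, hSD.2⟩)
      (by rw [card_insert_of_notMem hyS]; omega)
    have hwithout := ih hSX ((subset_insert y D).trans hDX) hSD.2 (by omega)
    rw [card_insert_of_notMem hyS] at hwith
    have hpascal : (v - #S - #D).choose (k - #S)
        = (v - (#S + 1) - #D).choose (k - (#S + 1)) + (v - #S - (#D + 1)).choose (k - #S) := by
      obtain ⟨n, hn⟩ : ∃ n, v - #S - #D = n + 1 := ⟨v - #S - #D - 1, by omega⟩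
      obtain ⟨m, hm⟩ : ∃ m, k - #S = m + 1 := ⟨k - #S - 1, by omega⟩
      rw [hn, hm, Nat.choose_succ_succ', show v - (#S + 1) - #D = n by omega,
        show k - (#S + 1) = m by omega, show v - #S - (#D + 1) = n by omega]
    rw [hsplit, add_mul, hpascal, mul_add, hwith] at hwithout
    exact Nat.add_left_cancel hwithout

theorem card_inter_eq (hdes : IsDesignF t v k lam X 𝒜) {τ S : Finset α} (hτX : τ ⊆ X)
    (hτ : #τ = t) (hSτ : S ⊆ τ) :
    #{A ∈ 𝒜 | A ∩ τ = S} = lam * (v - t).choose (k - #S) / (v - t).choose (k - t) := by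
  have hkv := hdes.2.1
  have htk := hdes.2.2.1
  have hSτcard : #S ≤ #τ := card_le_card hSτ
  have hcount := hdes.card_superset_disjoint_mul_choose (hSτ.trans hτX) (sdiff_subset.trans hτX)
    disjoint_sdiff (by rw [card_sdiff_of_subset hSτ]; omega)
  rw [card_sdiff_of_subset hSτ, show v - #S - (#τ - #S) = v - t by omega] at hcount
  simp_rw [← inter_eq_iff_subset_and_disjoint_sdiff hSτ] at hcount
  exact (Nat.div_eq_of_eq_mul_left (Nat.choose_pos (by omega)) hcount.symm).symm

end IsDesignF

theorem mem_Rset {t : ℕ} {a : ℕ → ℕ} {p : Finset ℕ × ℕ} :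
    p ∈ Rset t a ↔ (p.1 ⊆ Icc 1 t ∧ #p.1 ∈ Icc 1 (t - 1)) ∧ p.2 ∈ Icc 1 (a #p.1) := by
  simp only [Rset, mem_biUnion, mem_product, mem_powersetCard]
  constructor
  · rintro ⟨s, hs, ⟨hY, rfl⟩, hi⟩
    exact ⟨⟨hY, hs⟩, hi⟩
  · rintro ⟨⟨hY, hs⟩, hi⟩
    exact ⟨_, hs, ⟨hY, rfl⟩, hi⟩

/-- Given a `t`-design with distinct blocks, a set `τ = {x₁, …, x_t}` of `t`
points, and `0 ≤ a_s ≤ λ_s^t = λ·C(v−t,k−s)/C(v−t,k−t)` for `1 ≤ s ≤ t−1`, there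
is an injective map `ψ : R → 𝒜` such that `ψ((Y,i)) ∩ τ = {x_j : j ∈ Y}`
for every `(Y,i) ∈ R`. -/
theorem stmt10 {α : Type*} [DecidableEq α] (t v k lam : ℕ)
    (X : Finset α) (𝒜 : Finset (Finset α))
    (hdes : IsDesignF t v k lam X 𝒜)
    (a : ℕ → ℕ)
    (ha : ∀ s ∈ Finset.Icc 1 (t - 1),
      a s ≤ lam * Nat.choose (v - t) (k - s) / Nat.choose (v - t) (k - t))
    (x : ℕ → α) (hxinj : Set.InjOn x ↑(Finset.Icc 1 t))
    (hxX : ∀ j ∈ Finset.Icc 1 t, x j ∈ X) :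
    ∃ ψ : Finset ℕ × ℕ → Finset α,
      Set.InjOn ψ ↑(Rset t a) ∧
      ∀ p ∈ Rset t a, ψ p ∈ 𝒜 ∧
        ψ p ∩ ((Finset.Icc 1 t).image x) = p.1.image x := by
  set τ := (Icc 1 t).image x
  have hτX : τ ⊆ X := image_subset_iff.2 hxX
  have hτ : #τ = t := by rw [card_image_of_injOn hxinj, Nat.card_Icc, Nat.add_sub_cancel]
  let I : Set (Finset ℕ) := {Y | Y ⊆ Icc 1 t ∧ #Y ∈ Icc 1 (t - 1)}
  have himage : Set.InjOn (·.image x) I := fun Y hY Z hZ =>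
    image_injOn_powerset_of_injOn hxinj (mem_powerset.2 hY.1) (mem_powerset.2 hZ.1)
  have hdisj : I.PairwiseDisjoint fun Y => {A ∈ 𝒜 | A ∩ τ = Y.image x} :=
    fun Y hY Z hZ hne => disjoint_filter.2 fun A _ hAY hAZ => hne (himage hY hZ (hAY.symm.trans hAZ))
  obtain ⟨ψ, hinj, hmaps⟩ := hdisj.exists_injOn_of_card_le (J := fun Y => Icc 1 (a #Y)) fun Y hY => by
    rw [Nat.card_Icc, Nat.add_sub_cancel, hdes.card_inter_eq hτX hτ (image_subset_image hY.1),
      card_image_of_injOn (hxinj.mono (coe_subset.2 hY.1))]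
    exact ha _ hY.2
  exact ⟨ψ, hinj.mono fun p hp => mem_Rset.1 hp,
    fun p hp => mem_filter.1 (hmaps p (mem_Rset.1 hp).1 (mem_Rset.1 hp).2)⟩
end
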